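/- (Regulation preservation, direction 1) Let f be asymptotic on M and suppose Gf(y) contains a positive (resp. negative) edge i → i', i.e., ∂⁺ᵢf_{i'}(y) or ∂⁻ᵢf_{i'}(y) is positive (resp. negative). Then for every x ∈ ψ⁻¹(y) there exist indices j, j' such that G𝔹(f)(x) contains a positive (resp. negative) edge (i,j) → (i',j'). -/

import Mathlib

/-!
Common setup: multilevel discrete networks (Faure–Kaji, "A circuit-preserving
mapping from multilevel to Boolean dynamics").

A gene `i` takes levels in `{0,...,b i}`, encoded as `Fin (b i + 1)`.
The Boolean case is `b i = 1`.
-/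

namespace GRN

section Generic

variable {ι : Type*} [Fintype ι] [DecidableEq ι] (b : ι → ℕ)

/-- the state space `∏ i {0,…,b i}` -/
abbrev GState := ∀ i : ι, Fin (b i + 1)

/-- L¹ distance between states -/
def dist1 (x x' : GState b) : ℕ := ∑ i, Nat.dist (x i : ℕ) (x' i : ℕ)

/-- edge relation of the asynchronous state transition graph `Γ(f)` -/
def stgEdge (f : GState b → GState b) (x x' : GState b) : Prop :=
  ∃ j : ι, (∀ k, k ≠ j → x' k = x k) ∧
    (((x j : ℕ) < (f x j : ℕ) ∧ (x' j : ℕ) = (x j : ℕ) + 1) ∨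
     ((f x j : ℕ) < (x j : ℕ) ∧ (x' j : ℕ) + 1 = (x j : ℕ)))

/-- a grid graph: every edge joins states at distance one, and there are no
two parallel outward edges at any vertex -/
def IsGridGraph (E : GState b → GState b → Prop) : Prop :=
  (∀ x x', E x x' → dist1 b x x' = 1) ∧
  (∀ (x x' x'' : GState b) (j : ι), E x x' → E x x'' →
    (∀ k, k ≠ j → x' k = x k) → (∀ k, k ≠ j → x'' k = x k) → x' = x'')

/-- asymptotic evolution function: `f i x ∈ {0, x i, b i}` -/
def Asymptotic (f : GState b → GState b) : Prop :=
  ∀ (x : GState b) (i : ι), (f x i : ℕ) = 0 ∨ f x i = x i ∨ (f x i : ℕ) = b i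

/-- stepwise (unitary) evolution function: `|f i x - x i| ≤ 1` -/
def Stepwise (f : GState b → GState b) : Prop :=
  ∀ (x : GState b) (i : ι), (f x i : ℕ) ≤ (x i : ℕ) + 1 ∧ (x i : ℕ) ≤ (f x i : ℕ) + 1

/-- the asymptotic function `f̄` associated with `f` -/
def asym (f : GState b → GState b) : GState b → GState b := fun x i =>
  if (x i : ℕ) < (f x i : ℕ) then Fin.last (b i)
  else if (f x i : ℕ) < (x i : ℕ) then 0 else x i

/-- the stepwise function `f̂` associated with `f` -/
def stepw (f : GState b → GState b) : GState b → GState b := fun x i =>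
  if h : (x i : ℕ) < (f x i : ℕ) then ⟨(x i : ℕ) + 1, Nat.lt_of_le_of_lt h (f x i).isLt⟩
  else if (f x i : ℕ) < (x i : ℕ) then
    ⟨(x i : ℕ) - 1, lt_of_le_of_lt (Nat.sub_le _ _) (x i).isLt⟩
  else x i

/-- `x + e j` (defined when `x j < b j`) -/
def bump (x : GState b) (j : ι) (h : (x j : ℕ) < b j) : GState b :=
  Function.update x j ⟨(x j : ℕ) + 1, Nat.succ_lt_succ h⟩

/-- `x - e j` -/
def drop (x : GState b) (j : ι) : GState b :=
  Function.update x j ⟨(x j : ℕ) - 1, lt_of_le_of_lt (Nat.sub_le _ _) (x j).isLt⟩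

/-- positive edge `j → i` in the local interaction graph `Gf(x)`:
`∂⁺ⱼfᵢ(x) > 0` or `∂⁻ⱼfᵢ(x) > 0` -/
def PosEdge (f : GState b → GState b) (x : GState b) (j i : ι) : Prop :=
  (∃ h : (x j : ℕ) < b j, (f x i : ℕ) < (f (bump b x j h) i : ℕ)) ∨
  (0 < (x j : ℕ) ∧ (f (drop b x j) i : ℕ) < (f x i : ℕ))

/-- negative edge `j → i` in the local interaction graph `Gf(x)` -/
def NegEdge (f : GState b → GState b) (x : GState b) (j i : ι) : Prop :=
  (∃ h : (x j : ℕ) < b j, (f (bump b x j h) i : ℕ) < (f x i : ℕ)) ∨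
  (0 < (x j : ℕ) ∧ (f x i : ℕ) < (f (drop b x j) i : ℕ))

/-- an edge with sign `s` (`true` = negative) -/
def SignedEdge (f : GState b → GState b) (x : GState b) (s : Bool) (j i : ι) : Prop :=
  if s then NegEdge b f x j i else PosEdge b f x j i

/-- a type-1 functional circuit at `x`, negative iff `neg`: a cycle (with
pairwise-distinct vertices) in the local interaction graph `Gf(x)` whose number
of negative edges is odd iff `neg` -/
def HasType1Circuit (f : GState b → GState b) (x : GState b) (neg : Bool) : Prop :=
  ∃ (k : ℕ) (v : Fin (k + 1) → ι) (s : Fin (k + 1) → Bool),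
    Function.Injective v ∧
    (∀ t, SignedEdge b f x (s t) (v t) (v (t + 1))) ∧
    (Odd (Finset.univ.filter fun t => s t = true).card ↔ neg = true)

/-- mutual reachability -/
def InSameSCC (E : GState b → GState b → Prop) (x y : GState b) : Prop :=
  Relation.ReflTransGen E x y ∧ Relation.ReflTransGen E y x

/-- the strongly connected component of `x` -/
def sccOf (E : GState b → GState b → Prop) (x : GState b) : Set (GState b) :=
  {y | InSameSCC b E x y}

/-- attractor: terminal strongly connected set of states -/
def IsAttractor (E : GState b → GState b → Prop) (A : Set (GState b)) : Prop :=
  A.Nonempty ∧ (∀ x ∈ A, ∀ y ∈ A, Relation.ReflTransGen E x y) ∧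
  (∀ x ∈ A, ∀ y, E x y → y ∈ A)

/-- stable state: no outgoing edges -/
def IsStable (E : GState b → GState b → Prop) (x : GState b) : Prop :=
  ∀ y, ¬ E x y

end Generic

section Binarisation

variable {n : ℕ} {m : Fin n → ℕ}

/-- index set of the Boolean state space `𝔹^(m₁+⋯+mₙ)` -/
abbrev BIdx (m : Fin n → ℕ) := Σ i : Fin n, Fin (m i)

/-- all maximal levels equal to 1 -/
abbrev bOne (m : Fin n → ℕ) : BIdx m → ℕ := fun _ => 1

/-- the Boolean state space `𝔹^(m₁+⋯+mₙ)` -/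
abbrev BState (m : Fin n → ℕ) := GState (bOne m)

/-- the surjection `ψ : 𝔹^(m₁+⋯+mₙ) → M`, counting ones in each block -/
def psi (x : BState m) : GState m := fun i =>
  ⟨∑ j : Fin (m i), (x ⟨i, j⟩ : ℕ), Nat.lt_succ_of_le (by
    calc ∑ j : Fin (m i), (x ⟨i, j⟩ : ℕ) ≤ ∑ _j : Fin (m i), 1 :=
          Finset.sum_le_sum (fun j _ => Nat.lt_succ_iff.mp (x ⟨i, j⟩).isLt)
      _ = m i := by simp)⟩

/-- Van Ham's embedding `b₀ : M → 𝔹^(m₁+⋯+mₙ)`: level `k` ↦ `k` ones then zeros -/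
def vanHam (y : GState m) : BState m := fun p =>
  if (p.2 : ℕ) < (y p.1 : ℕ) then 1 else 0

/-- the binarisation `𝔹(f)` of an (asymptotic) evolution function `f` -/
def binf (f : GState m → GState m) : BState m → BState m := fun x p =>
  if (psi x p.1 : ℕ) < (f (psi x) p.1 : ℕ) then 1
  else if (f (psi x) p.1 : ℕ) < (psi x p.1 : ℕ) then 0
  else x p

/-- the binarisation `𝔹(Γ)` of a grid graph over `M`:
edge `x → x'` iff `d(x,x') = 1` and `ψ(x) → ψ(x')` in `Γ` -/
def binGraph (E : GState m → GState m → Prop) : BState m → BState m → Prop :=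
  fun x x' => dist1 (bOne m) x x' = 1 ∧ E (psi x) (psi x')

/-- the action of `𝕊 = ∏ᵢ S_{mᵢ}` on `𝔹^(m₁+⋯+mₙ)` permuting blocks coordinatewise -/
def act (σ : ∀ i : Fin n, Equiv.Perm (Fin (m i))) (x : BState m) : BState m :=
  fun p => x ⟨p.1, σ p.1 p.2⟩

/-- `𝕊`-symmetric Boolean evolution function -/
def SSym (g : BState m → BState m) : Prop :=
  ∀ (σ : ∀ i : Fin n, Equiv.Perm (Fin (m i))) (x : BState m) (p : BIdx m),
    g (act σ x) p = g x ⟨p.1, σ p.1 p.2⟩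

end Binarisation

/-!
For asymptotic `f` the binarisation commutes with `ψ`: in block `i` the Boolean network
`𝔹(f)` sets every bit to `1` when `f` jumps up to `mᵢ`, to `0` when it drops to `0`, and
keeps `x` when `f` stays put, so `ψ ∘ 𝔹(f) = f ∘ ψ`. Given `ψ x = y`, the step `y ± eᵢ` is
realised by flipping one bit `(i, j)` of `x` (a `0` for `+eᵢ`, a `1` for `-eᵢ`). If this step
moves `f_{i'}` up, then by commutation it increases the number of ones of `𝔹(f)` in block `i'`,
so some bit `(i', j')` of `𝔹(f)` increases.
-/

section BinarisationEdges

variable {n : ℕ} {m : Fin n → ℕ}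

lemma psi_val (x : BState m) (i : Fin n) :
    (psi x i : ℕ) = ∑ j : Fin (m i), (x ⟨i, j⟩ : ℕ) := rfl

lemma exists_lt_of_psi_lt {x x' : BState m} {i : Fin n} (h : (psi x i : ℕ) < psi x' i) :
    ∃ j : Fin (m i), (x ⟨i, j⟩ : ℕ) < x' ⟨i, j⟩ := by
  obtain ⟨j, -, hj⟩ := Finset.exists_lt_of_sum_lt (by simpa only [psi_val] using h)
  exact ⟨j, hj⟩

lemma exists_lt_one_of_psi_lt {x : BState m} {i : Fin n} (h : (psi x i : ℕ) < m i) :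
    ∃ j : Fin (m i), (x ⟨i, j⟩ : ℕ) < 1 := by
  refine exists_lt_of_psi_lt (x' := fun _ => 1) ?_
  simpa [psi_val] using h

lemma exists_pos_of_psi_pos {x : BState m} {i : Fin n} (h : 0 < (psi x i : ℕ)) :
    ∃ j : Fin (m i), 0 < (x ⟨i, j⟩ : ℕ) := by
  refine exists_lt_of_psi_lt (x := fun _ => 0) ?_
  simpa [psi_val] using h

lemma psi_update_of_ne (x : BState m) {i k : Fin n} (hk : k ≠ i) (j : Fin (m i)) (v : Fin 2) :
    psi (Function.update x ⟨i, j⟩ v) k = psi x k := by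
  ext
  simp only [psi_val]
  refine Finset.sum_congr rfl fun j' _ => ?_
  rw [Function.update_of_ne (by simp [hk])]

lemma psi_update_self (x : BState m) (i : Fin n) (j : Fin (m i)) (v : Fin 2) :
    (psi (Function.update x ⟨i, j⟩ v) i : ℕ) + x ⟨i, j⟩ = psi x i + v := by
  simp only [psi_val]
  rw [← Finset.add_sum_erase _ _ (Finset.mem_univ j),
    ← Finset.add_sum_erase _ (fun j' => (x ⟨i, j'⟩ : ℕ)) (Finset.mem_univ j)]
  have hrest : ∀ j' ∈ Finset.univ.erase j,
      (Function.update x ⟨i, j⟩ v ⟨i, j'⟩ : ℕ) = x ⟨i, j'⟩ :=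
    fun j' hj' => by rw [Function.update_of_ne (by simpa using Finset.ne_of_mem_erase hj')]
  rw [Finset.sum_congr rfl hrest, Function.update_self]
  ring

lemma binf_of_lt {f : GState m → GState m} {x : BState m} {i : Fin n}
    (h : (psi x i : ℕ) < f (psi x) i) (j : Fin (m i)) : binf f x ⟨i, j⟩ = 1 :=
  if_pos h

lemma binf_of_gt {f : GState m → GState m} {x : BState m} {i : Fin n}
    (h : (f (psi x) i : ℕ) < psi x i) (j : Fin (m i)) : binf f x ⟨i, j⟩ = 0 :=
  (if_neg h.not_gt).trans (if_pos h)

lemma binf_of_eq {f : GState m → GState m} {x : BState m} {i : Fin n}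
    (h : (psi x i : ℕ) = f (psi x) i) (j : Fin (m i)) : binf f x ⟨i, j⟩ = x ⟨i, j⟩ :=
  (if_neg h.not_lt).trans (if_neg h.symm.not_lt)

lemma psi_binf {f : GState m → GState m} (hf : Asymptotic m f) (x : BState m) :
    psi (binf f x) = f (psi x) := by
  funext i
  apply Fin.ext
  have hf_val := hf (psi x) i
  rw [Fin.ext_iff] at hf_val
  rcases lt_trichotomy (psi x i : ℕ) (f (psi x) i) with hlt | heq | hgt
  · simp only [psi_val, binf_of_lt hlt, Fin.coe_ofNat_eq_mod, Nat.mod_succ, Finset.sum_const,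
      Finset.card_univ, Fintype.card_fin, smul_eq_mul, mul_one]
    omega
  · simp only [psi_val, binf_of_eq heq]
    exact heq
  · simp only [psi_val, binf_of_gt hgt, Fin.coe_ofNat_eq_mod, Nat.zero_mod, Finset.sum_const_zero]
    omega

lemma psi_bump {x : BState m} {i : Fin n} {j : Fin (m i)}
    (hj : (x ⟨i, j⟩ : ℕ) < bOne m ⟨i, j⟩) (hb : (psi x i : ℕ) < m i) :
    psi (bump (bOne m) x ⟨i, j⟩ hj) = bump m (psi x) i hb := by
  funext k
  by_cases hk : k = i
  · subst hk
    have := psi_update_self x k j ⟨(x ⟨k, j⟩ : ℕ) + 1, Nat.succ_lt_succ hj⟩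
    ext
    simp only [bump, Function.update_self] at this ⊢
    omega
  · rw [bump, psi_update_of_ne _ hk, bump, Function.update_of_ne hk]

lemma psi_drop {x : BState m} {i : Fin n} {j : Fin (m i)} (hj : 0 < (x ⟨i, j⟩ : ℕ)) :
    psi (drop (bOne m) x ⟨i, j⟩) = drop m (psi x) i := by
  funext k
  by_cases hk : k = i
  · subst hk
    have := psi_update_self x k j ⟨_, (Nat.sub_le _ 1).trans_lt (x ⟨k, j⟩).isLt⟩
    ext
    simp only [drop, Function.update_self] at this ⊢
    omega
  · rw [drop, psi_update_of_ne _ hk, drop, Function.update_of_ne hk]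

lemma exists_binf_lt {f : GState m → GState m} (hf : Asymptotic m f) {x x' : BState m}
    {i : Fin n} (h : (f (psi x) i : ℕ) < f (psi x') i) :
    ∃ j : Fin (m i), (binf f x ⟨i, j⟩ : ℕ) < binf f x' ⟨i, j⟩ :=
  exists_lt_of_psi_lt (by rwa [psi_binf hf, psi_binf hf])

lemma exists_posEdge_binf {f : GState m → GState m} (hf : Asymptotic m f) {x : BState m}
    {i i' : Fin n} (h : PosEdge m f (psi x) i i') :
    ∃ (j : Fin (m i)) (j' : Fin (m i')), PosEdge (bOne m) (binf f) x ⟨i, j⟩ ⟨i', j'⟩ := by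
  rcases h with ⟨hb, hlt⟩ | ⟨hpos, hlt⟩
  · obtain ⟨j, hj⟩ := exists_lt_one_of_psi_lt hb
    obtain ⟨j', hj'⟩ := exists_binf_lt hf (i := i') (x := x) (x' := bump (bOne m) x ⟨i, j⟩ hj)
      (by rwa [psi_bump hj hb])
    exact ⟨j, j', Or.inl ⟨hj, hj'⟩⟩
  · obtain ⟨j, hj⟩ := exists_pos_of_psi_pos hpos
    obtain ⟨j', hj'⟩ := exists_binf_lt hf (i := i') (x := drop (bOne m) x ⟨i, j⟩) (x' := x)
      (by rwa [psi_drop hj])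
    exact ⟨j, j', Or.inr ⟨hj, hj'⟩⟩

lemma exists_negEdge_binf {f : GState m → GState m} (hf : Asymptotic m f) {x : BState m}
    {i i' : Fin n} (h : NegEdge m f (psi x) i i') :
    ∃ (j : Fin (m i)) (j' : Fin (m i')), NegEdge (bOne m) (binf f) x ⟨i, j⟩ ⟨i', j'⟩ := by
  rcases h with ⟨hb, hlt⟩ | ⟨hpos, hlt⟩
  · obtain ⟨j, hj⟩ := exists_lt_one_of_psi_lt hb
    obtain ⟨j', hj'⟩ := exists_binf_lt hf (i := i') (x := bump (bOne m) x ⟨i, j⟩ hj) (x' := x)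
      (by rwa [psi_bump hj hb])
    exact ⟨j, j', Or.inl ⟨hj, hj'⟩⟩
  · obtain ⟨j, hj⟩ := exists_pos_of_psi_pos hpos
    obtain ⟨j', hj'⟩ := exists_binf_lt hf (i := i') (x := x) (x' := drop (bOne m) x ⟨i, j⟩)
      (by rwa [psi_drop hj])
    exact ⟨j, j', Or.inr ⟨hj, hj'⟩⟩

end BinarisationEdges

/-- regulation preservation, direction 1: a signed edge
`i → i'` of `Gf(y)` gives, at every `x ∈ ψ⁻¹(y)`, a like-signed edge
`(i,j) → (i',j')` of `G𝔹(f)(x)` for some `j`, `j'`. -/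
theorem regulation_preserving_forward
    {n : ℕ} {m : Fin n → ℕ} (f : GState m → GState m)
    (hf : Asymptotic m f) (y : GState m) (i i' : Fin n) (s : Bool)
    (h : SignedEdge m f y s i i') :
    ∀ x : BState m, psi x = y →
      ∃ (j : Fin (m i)) (j' : Fin (m i')),
        SignedEdge (bOne m) (binf f) x s ⟨i, j⟩ ⟨i', j'⟩ := by
  rintro x rfl
  cases s
  · exact exists_posEdge_binf hf h
  · exact exists_negEdge_binf hf h

end GRN
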